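/- arXiv:1209.5179 — 8 statements merged into one kernel-verified Lean document; each statement's English description precedes it below -/
import Mathlib

section
/- Let f : I° ⊆ ℝ → ℝ be differentiable on the open interval I°, a, b ∈ I° with a < b, and g : [a,b] → ℝ with f', g integrable on [a,b]. Then for all x ∈ [a,b]: f(a)·∫_a^x g(s) ds + f(b)·∫_x^b g(s) ds − ∫_a^b f(s)g(s) ds = ∫_a^b (∫_x^t g(s) ds)·f'(t) dt. -/
/-!
This is integration by parts for absolutely continuous functions. The primitive
`G t = ∫_x^t g` is absolutely continuous with `G' = g` almost everywhere, and `f`, being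
everywhere differentiable with integrable derivative, is absolutely continuous too. Hence
`∫_a^b G f' = G(b) f(b) - G(a) f(a) - ∫_a^b g f`, with `G(a) = -∫_a^x g`.
-/

open MeasureTheory Set

theorem absolutelyContinuousOnInterval_const {X : Type*} [PseudoMetricSpace X] (c : X) (a b : ℝ) :
    AbsolutelyContinuousOnInterval (fun _ : ℝ ↦ c) a b := by
  simp [AbsolutelyContinuousOnInterval, tendsto_const_nhds]

theorem AbsolutelyContinuousOnInterval.congr {X : Type*} [PseudoMetricSpace X] {f g : ℝ → X}
    {a b : ℝ} (hf : AbsolutelyContinuousOnInterval f a b) (hfg : EqOn f g (uIcc a b)) :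
    AbsolutelyContinuousOnInterval g a b := by
  refine hf.congr' (Filter.eventually_inf_principal.2 (Filter.Eventually.of_forall fun E hE ↦ ?_))
  exact Finset.sum_congr rfl fun i hi ↦ by rw [hfg (hE.1 i hi).1, hfg (hE.1 i hi).2]

theorem absolutelyContinuousOnInterval_of_hasDerivAt {f f' : ℝ → ℝ} {a b : ℝ}
    (hf : ∀ t ∈ uIcc a b, HasDerivAt f (f' t) t) (hf' : IntervalIntegrable f' volume a b) :
    AbsolutelyContinuousOnInterval f a b := by
  refine ((hf'.absolutelyContinuousOnInterval_intervalIntegral left_mem_uIcc).add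
    (absolutelyContinuousOnInterval_const (f a) a b)).congr fun t ht ↦ ?_
  have hsub : uIcc a t ⊆ uIcc a b := uIcc_subset_uIcc_left ht
  show (∫ s in a..t, f' s) + f a = f t
  rw [intervalIntegral.integral_eq_sub_of_hasDerivAt (fun s hs ↦ hf s (hsub hs))
    (hf'.mono_set hsub), sub_add_cancel]

theorem integral_primitive_mul_deriv_eq {f f' g : ℝ → ℝ} {a b x : ℝ}
    (hf : ∀ t ∈ uIcc a b, HasDerivAt f (f' t) t) (hf' : IntervalIntegrable f' volume a b)
    (hg : IntervalIntegrable g volume a b) (hx : x ∈ uIcc a b) :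
    ∫ t in a..b, (∫ s in x..t, g s) * f' t
      = f a * (∫ s in a..x, g s) + f b * (∫ s in x..b, g s) - ∫ s in a..b, f s * g s := by
  have hG := hg.absolutelyContinuousOnInterval_intervalIntegral hx
  have h_deriv_f : ∫ t in a..b, (∫ s in x..t, g s) * deriv f t
      = ∫ t in a..b, (∫ s in x..t, g s) * f' t :=
    intervalIntegral.integral_congr fun t ht ↦ by rw [(hf t ht).deriv]
  have h_deriv_G : ∫ t in a..b, deriv (fun t ↦ ∫ s in x..t, g s) t * f t
      = ∫ t in a..b, f t * g t := by
    refine intervalIntegral.integral_congr_ae ?_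
    filter_upwards [hg.ae_hasDerivAt_integral] with t ht ht'
    rw [(ht (uIoc_subset_uIcc ht') x hx).deriv, mul_comm]
  rw [← h_deriv_f, hG.integral_mul_deriv_eq_deriv_mul
    (absolutelyContinuousOnInterval_of_hasDerivAt hf hf'), h_deriv_G,
    intervalIntegral.integral_symm x a]
  ring

theorem stmt_0_general (f f' g : ℝ → ℝ) (a b : ℝ) (hab : a < b)
    (I : Set ℝ) (hIab : Icc a b ⊆ I)
    (hf : ∀ t ∈ I, HasDerivAt f (f' t) t)
    (hf' : IntervalIntegrable f' volume a b)
    (hg : IntervalIntegrable g volume a b)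
    (x : ℝ) (hx : x ∈ Icc a b) :
    f a * (∫ s in a..x, g s) + f b * (∫ s in x..b, g s) - ∫ s in a..b, f s * g s
      = ∫ t in a..b, (∫ s in x..t, g s) * f' t := by
  rw [← uIcc_of_le hab.le] at hIab hx
  exact (integral_primitive_mul_deriv_eq (fun t ht ↦ hf t (hIab ht)) hf' hg hx).symm

theorem stmt_0 (f f' g : ℝ → ℝ) (a b : ℝ) (hab : a < b)
    (I : Set ℝ) (hI : IsOpen I) (hIab : Icc a b ⊆ I)
    (hf : ∀ t ∈ I, HasDerivAt f (f' t) t)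
    (hf' : IntervalIntegrable f' volume a b)
    (hg : IntervalIntegrable g volume a b)
    (x : ℝ) (hx : x ∈ Icc a b) :
    f a * (∫ s in a..x, g s) + f b * (∫ s in x..b, g s) - ∫ s in a..b, f s * g s
      = ∫ t in a..b, (∫ s in x..t, g s) * f' t :=
  stmt_0_general f f' g a b hab I hIab hf hf' hg x hx
end

section
/- Let f : I° ⊆ ℝ → ℝ be differentiable on I°, a, b ∈ I° with a < b, g : [a,b] → ℝ with f', g ∈ L[a,b], and x ∈ [a,b]. Define S_g(t) = ∫_a^t g(s) ds for t ∈ [a,x) and S_g(t) = −∫_t^b g(s) ds for t ∈ [x,b]. Then f(x)·∫_a^b g(s) ds − ∫_a^b f(s)g(s) ds = ∫_a^b S_g(t)·f'(t) dt. -/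
/-!
Off the point `x`, `S_g(t) = ∫_b^t g + 𝟙[t ≤ x] ∫_a^b g` on `[a, b]`. Integrating the first
term against `f'` by parts (both `t ↦ ∫_b^t g` and `f` are absolutely continuous) gives
`f(a) ∫_a^b g - ∫_a^b f g`, and the second contributes `(f(x) - f(a)) ∫_a^b g`.
-/

open MeasureTheory Set

theorem intervalIntegral.integral_primitive_mul_of_hasDerivAt {f f' g : ℝ → ℝ} {a b c : ℝ}
    (hf : ∀ t ∈ uIcc a b, HasDerivAt f (f' t) t) (hf' : IntervalIntegrable f' volume a b)
    (hg : IntervalIntegrable g volume a b) (hc : c ∈ uIcc a b) :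
    ∫ t in a..b, (∫ s in c..t, g s) * f' t
      = (∫ s in c..b, g s) * f b - (∫ s in c..a, g s) * f a - ∫ t in a..b, g t * f t := by
  have hG := hg.absolutelyContinuousOnInterval_intervalIntegral hc
  have hF := absolutelyContinuousOnInterval_of_hasDerivAt hf hf'
  have hderiv_f : ∀ᵐ t, t ∈ uIoc a b →
      (∫ s in c..t, g s) * f' t = (∫ s in c..t, g s) * deriv f t :=
    Filter.Eventually.of_forall fun t ht => by rw [(hf t (uIoc_subset_uIcc ht)).deriv]
  have hderiv_G : ∀ᵐ t, t ∈ uIoc a b →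
      deriv (fun t => ∫ s in c..t, g s) t * f t = g t * f t := by
    filter_upwards [hg.ae_hasDerivAt_integral] with t ht htab
    rw [(ht (uIoc_subset_uIcc htab) c hc).deriv]
  rw [integral_congr_ae hderiv_f, hG.integral_mul_deriv_eq_deriv_mul hF,
    integral_congr_ae hderiv_G]

theorem ae_ite_primitive_eq_primitive_add_indicator {g : ℝ → ℝ} {a b : ℝ}
    (hg : IntervalIntegrable g volume a b) (x : ℝ) :
    ∀ᵐ t, t ∈ uIoc a b → (if t < x then ∫ s in a..t, g s else -∫ s in t..b, g s)
      = (∫ s in b..t, g s) + {t | t ≤ x}.indicator (fun _ => ∫ s in a..b, g s) t := by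
  have hne : ∀ᵐ t : ℝ, t ≠ x := by simp [ae_iff, measure_singleton]
  filter_upwards [hne] with t htx ht
  rcases htx.lt_or_gt with htx | htx
  · have hgt : IntervalIntegrable g volume b t :=
      hg.mono_set (uIcc_subset_uIcc right_mem_uIcc (uIoc_subset_uIcc ht))
    rw [if_pos htx, indicator_of_mem (show t ∈ {t | t ≤ x} from htx.le),
      ← intervalIntegral.integral_add_adjacent_intervals hg hgt, add_comm]
  · rw [if_neg htx.not_gt, indicator_of_notMem (show t ∉ {t | t ≤ x} from htx.not_ge),
      intervalIntegral.integral_symm t b, add_zero]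

theorem stmt_1_general (f f' g : ℝ → ℝ) (a b : ℝ) (hab : a < b)
    (I : Set ℝ) (hIab : Icc a b ⊆ I)
    (hf : ∀ t ∈ I, HasDerivAt f (f' t) t)
    (hf' : IntervalIntegrable f' volume a b)
    (hg : IntervalIntegrable g volume a b)
    (x : ℝ) (hx : x ∈ Icc a b)
    (Sg : ℝ → ℝ)
    (hSg : ∀ t, Sg t = if t < x then ∫ s in a..t, g s else -∫ s in t..b, g s) :
    f x * (∫ s in a..b, g s) - (∫ s in a..b, f s * g s)
      = ∫ t in a..b, Sg t * f' t := by
  rw [← uIcc_of_le hab.le] at hIab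
  have hx' : x ∈ uIcc a b := uIcc_of_le hab.le ▸ hx
  have hfab : ∀ t ∈ uIcc a b, HasDerivAt f (f' t) t := fun t ht => hf t (hIab ht)
  set G := ∫ s in a..b, g s
  have hSg_ae : ∀ᵐ t, t ∈ uIoc a b →
      Sg t * f' t
        = (∫ s in b..t, g s) * f' t + {t | t ≤ x}.indicator (fun t => G * f' t) t := by
    filter_upwards [ae_ite_primitive_eq_primitive_add_indicator hg x] with t ht htab
    rw [hSg, ht htab, add_mul, indicator_mul_left]
  have hG_cont : ContinuousOn (fun t => ∫ s in b..t, g s) (uIcc a b) :=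
    (hg.absolutelyContinuousOnInterval_intervalIntegral right_mem_uIcc).continuousOn
  have hind : IntervalIntegrable ({t | t ≤ x}.indicator (fun t => G * f' t)) volume a b :=
    intervalIntegrable_iff.2 ((intervalIntegrable_iff.1 (hf'.const_mul G)).indicator
      measurableSet_Iic)
  rw [intervalIntegral.integral_congr_ae hSg_ae,
    intervalIntegral.integral_add (hf'.continuousOn_mul hG_cont) hind,
    intervalIntegral.integral_primitive_mul_of_hasDerivAt hfab hf' hg right_mem_uIcc,
    intervalIntegral.integral_indicator hx, intervalIntegral.integral_const_mul,
    intervalIntegral.integral_eq_sub_of_hasDerivAt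
      (fun t ht => hfab t (uIcc_subset_uIcc_left hx' ht))
      (hf'.mono_set (uIcc_subset_uIcc_left hx')),
    intervalIntegral.integral_same, intervalIntegral.integral_symm (f := g) a b]
  simp_rw [mul_comm (g _)]
  ring

theorem stmt_1 (f f' g : ℝ → ℝ) (a b : ℝ) (hab : a < b)
    (I : Set ℝ) (hI : IsOpen I) (hIab : Icc a b ⊆ I)
    (hf : ∀ t ∈ I, HasDerivAt f (f' t) t)
    (hf' : IntervalIntegrable f' volume a b)
    (hg : IntervalIntegrable g volume a b)
    (x : ℝ) (hx : x ∈ Icc a b)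
    (Sg : ℝ → ℝ)
    (hSg : ∀ t, Sg t = if t < x then ∫ s in a..t, g s else -∫ s in t..b, g s) :
    f x * (∫ s in a..b, g s) - (∫ s in a..b, f s * g s)
      = ∫ t in a..b, Sg t * f' t :=
  stmt_1_general f f' g a b hab I hIab hf hf' hg x hx Sg hSg
end

section
/- Let f be differentiable on an open interval containing [a,b] with a < b, f' ∈ L[a,b], q ≥ 1, |f'|^q convex on [a,b], and g : [a,b] → ℝ continuous. Then for all x ∈ [a,b]: |f(a)∫_a^x g + f(b)∫_x^b g − ∫_a^b fg| ≤ ‖g‖_∞ · [((x−a)² + (b−x)²)/2]^{(q−1)/q} · { [((x−a)²(3b−x−2a) + (b−x)³)/(6(b−a))]·|f'(a)|^q + [((x−a)³ + (b−x)²(2b+x−3a))/(6(b−a))]·|f'(b)|^q }^{1/q}. -/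
open MeasureTheory Set intervalIntegral

/-!
Integrating by parts against `G t = ∫ s in x..t, g s` turns the left-hand side into
`∫ t in a..b, f' t * G t`, and `|G t| ≤ ‖g‖_∞ |t - x|`. Hölder's inequality for the weight
`|t - x|` bounds `∫ |t - x| |f'|` by `(∫ |t - x|) ^ (1 - 1/q) (∫ |t - x| |f'| ^ q) ^ (1/q)`, and
convexity bounds `|f' t| ^ q` by the chord through `|f' a| ^ q` and `|f' b| ^ q`. What is left
are integrals of polynomials.
-/

theorem memLp_ofReal_of_integrable_rpow {α : Type*} [MeasurableSpace α] {μ : Measure α}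
    {F : α → ℝ} {r : ℝ} (hr : 0 < r) (hF : AEStronglyMeasurable F μ) (hF0 : 0 ≤ᵐ[μ] F)
    (hF_int : Integrable (fun x => F x ^ r) μ) : MemLp F (ENNReal.ofReal r) μ := by
  refine (integrable_norm_rpow_iff hF (by simpa using hr) ENNReal.ofReal_ne_top).1 ?_
  rw [ENNReal.toReal_ofReal hr.le]
  refine hF_int.congr ?_
  filter_upwards [hF0] with x hx
  rw [Real.norm_of_nonneg hx]

theorem integral_mul_le_weighted_Lq_of_nonneg {α : Type*} [MeasurableSpace α] {μ : Measure α}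
    {w h : α → ℝ} {q : ℝ} (hq : 1 ≤ q) (hw : 0 ≤ᵐ[μ] w) (hh : 0 ≤ᵐ[μ] h)
    (hw_int : Integrable w μ) (hh_meas : AEStronglyMeasurable h μ)
    (hwh_int : Integrable (fun x => w x * h x ^ q) μ) :
    ∫ x, w x * h x ∂μ ≤ (∫ x, w x ∂μ) ^ ((q - 1) / q) * (∫ x, w x * h x ^ q ∂μ) ^ (1 / q) := by
  rcases hq.eq_or_lt with rfl | hq
  · simp
  -- Hölder for `w ^ p⁻¹` and `w ^ q⁻¹ * h`, with `p` the conjugate exponent of `q`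
  have hpq : q.conjExponent.HolderConjugate q := (Real.HolderConjugate.conjExponent hq).symm
  set p := q.conjExponent
  have hw_meas := hw_int.aestronglyMeasurable
  have hF_pow : ∀ᵐ x ∂μ, (w x ^ p⁻¹) ^ p = w x := by
    filter_upwards [hw] with x hx using Real.rpow_inv_rpow hx hpq.ne_zero
  have hG_pow : ∀ᵐ x ∂μ, (w x ^ q⁻¹ * h x) ^ q = w x * h x ^ q := by
    filter_upwards [hw, hh] with x hwx hhx
    rw [Real.mul_rpow (Real.rpow_nonneg hwx _) hhx, Real.rpow_inv_rpow hwx hpq.symm.ne_zero]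
  have hFG : ∀ᵐ x ∂μ, w x ^ p⁻¹ * (w x ^ q⁻¹ * h x) = w x * h x := by
    filter_upwards [hw] with x hx
    rw [← mul_assoc, ← Real.rpow_add' hx (by rw [hpq.inv_add_inv_eq_one]; exact one_ne_zero),
      hpq.inv_add_inv_eq_one, Real.rpow_one]
  have H := integral_mul_le_Lp_mul_Lq_of_nonneg (μ := μ) hpq (f := fun x => w x ^ p⁻¹)
    (g := fun x => w x ^ q⁻¹ * h x)
    (by filter_upwards [hw] with x hx using Real.rpow_nonneg hx _)
    (by filter_upwards [hw, hh] with x hwx hhx using mul_nonneg (Real.rpow_nonneg hwx _) hhx)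
    (memLp_ofReal_of_integrable_rpow hpq.pos (hw_meas.aemeasurable.pow_const _).aestronglyMeasurable
      (by filter_upwards [hw] with x hx using Real.rpow_nonneg hx _)
      (hw_int.congr (hF_pow.mono fun x hx => hx.symm)))
    (memLp_ofReal_of_integrable_rpow hpq.symm.pos
      ((hw_meas.aemeasurable.pow_const _).mul hh_meas.aemeasurable).aestronglyMeasurable
      (by filter_upwards [hw, hh] with x hwx hhx using mul_nonneg (Real.rpow_nonneg hwx _) hhx)
      (hwh_int.congr (hG_pow.mono fun x hx => hx.symm)))
  rwa [integral_congr_ae hF_pow, integral_congr_ae hG_pow, integral_congr_ae hFG,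
    show 1 / p = (q - 1) / q from one_div_div q (q - 1)] at H

theorem ConvexOn.le_chord {φ : ℝ → ℝ} {a b t : ℝ} (hφ : ConvexOn ℝ (Icc a b) φ) (hab : a < b)
    (ht : t ∈ Icc a b) : φ t ≤ ((b - t) * φ a + (t - a) * φ b) / (b - a) := by
  have hba : 0 < b - a := sub_pos.2 hab
  have key := hφ.2 (left_mem_Icc.2 hab.le) (right_mem_Icc.2 hab.le)
    (div_nonneg (sub_nonneg.2 ht.2) hba.le) (div_nonneg (sub_nonneg.2 ht.1) hba.le)
    (by rw [← add_div, sub_add_sub_cancel, div_self hba.ne'])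
  have ht' : ((b - t) / (b - a)) • a + ((t - a) / (b - a)) • b = t := by
    simp only [smul_eq_mul]; field_simp; ring
  rw [ht', smul_eq_mul, smul_eq_mul] at key
  exact key.trans_eq (by field_simp)

theorem integral_sub_mul_sub (u v c d : ℝ) :
    ∫ t in u..v, (t - c) * (t - d) =
      ((v - c) ^ 2 * (2 * v + c - 3 * d) - (u - c) ^ 2 * (2 * u + c - 3 * d)) / 6 := by
  have hderiv (t : ℝ) : HasDerivAt (fun t => (t - c) ^ 2 * (2 * t + c - 3 * d) / 6)
      ((t - c) * (t - d)) t := by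
    refine ((((hasDerivAt_id' t).sub_const c).fun_pow 2).fun_mul
      ((((hasDerivAt_id' t).const_mul 2).add_const c).sub_const (3 * d))
      |>.div_const 6).congr_deriv ?_
    norm_num; ring
  rw [integral_eq_sub_of_hasDerivAt (fun t _ => hderiv t)
    (Continuous.intervalIntegrable (by fun_prop) u v), sub_div]

variable {f f' g : ℝ → ℝ} {a b x : ℝ}

theorem integral_abs_sub_mul (hx : x ∈ Icc a b) {φ : ℝ → ℝ} (hφ : Continuous φ) :
    ∫ t in a..b, |t - x| * φ t = -(∫ t in a..x, (t - x) * φ t) + ∫ t in x..b, (t - x) * φ t := by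
  have hint (u v : ℝ) : IntervalIntegrable (fun t => |t - x| * φ t) volume u v :=
    Continuous.intervalIntegrable (by fun_prop) u v
  rw [← integral_add_adjacent_intervals (hint a x) (hint x b), ← intervalIntegral.integral_neg]
  congr 1 <;> refine integral_congr fun t ht => ?_
  · rw [uIcc_of_le hx.1] at ht
    simp only [abs_of_nonpos (sub_nonpos.2 ht.2), neg_mul]
  · rw [uIcc_of_le hx.2] at ht
    simp only [abs_of_nonneg (sub_nonneg.2 ht.1)]

theorem integral_abs_sub (hx : x ∈ Icc a b) :
    ∫ t in a..b, |t - x| = ((x - a) ^ 2 + (b - x) ^ 2) / 2 := by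
  have h := integral_abs_sub_mul hx (φ := fun _ => 1) continuous_const
  simp only [mul_one] at h
  rw [h, integral_comp_sub_right (fun t => t), integral_comp_sub_right (fun t => t), integral_id,
    integral_id]
  ring

theorem integral_abs_sub_mul_sub (hx : x ∈ Icc a b) (c : ℝ) :
    ∫ t in a..b, |t - x| * (t - c) =
      ((a - x) ^ 2 * (2 * a + x - 3 * c) + (b - x) ^ 2 * (2 * b + x - 3 * c)) / 6 := by
  rw [integral_abs_sub_mul hx (by fun_prop), integral_sub_mul_sub, integral_sub_mul_sub]
  ring

theorem integral_abs_sub_mul_chord (hab : a < b) (hx : x ∈ Icc a b) (A B : ℝ) :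
    ∫ t in a..b, |t - x| * (((b - t) * A + (t - a) * B) / (b - a)) =
      ((x - a) ^ 2 * (3 * b - x - 2 * a) + (b - x) ^ 3) / (6 * (b - a)) * A
        + ((x - a) ^ 3 + (b - x) ^ 2 * (2 * b + x - 3 * a)) / (6 * (b - a)) * B := by
  have hba : b - a ≠ 0 := (sub_pos.2 hab).ne'
  have hsplit : (fun t => |t - x| * (((b - t) * A + (t - a) * B) / (b - a))) =
      fun t => -(A / (b - a)) * (|t - x| * (t - b)) + B / (b - a) * (|t - x| * (t - a)) := by
    ext t; field_simp; ring
  rw [hsplit, intervalIntegral.integral_add, intervalIntegral.integral_const_mul,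
    intervalIntegral.integral_const_mul, integral_abs_sub_mul_sub hx, integral_abs_sub_mul_sub hx]
  · field_simp; ring
  all_goals exact Continuous.intervalIntegrable (by fun_prop) _ _

theorem sub_integral_mul_eq_integral_deriv_mul (hx : x ∈ Icc a b)
    (hf : ∀ t ∈ Icc a b, HasDerivAt f (f' t) t) (hf' : IntervalIntegrable f' volume a b)
    (hg : ContinuousOn g (Icc a b)) :
    f a * (∫ s in a..x, g s) + f b * (∫ s in x..b, g s) - ∫ s in a..b, f s * g s =
      ∫ t in a..b, f' t * ∫ s in x..t, g s := by
  have hab : a ≤ b := hx.1.trans hx.2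
  have hgi : IntervalIntegrable g volume a b := hg.intervalIntegrable_of_Icc hab
  have hG : ∀ t ∈ Ioo (min a b) (max a b), HasDerivAt (fun t => ∫ s in x..t, g s) (g t) t := by
    intro t ht
    rw [min_eq_left hab, max_eq_right hab] at ht
    exact integral_hasDerivAt_right
      (hgi.mono_set (by rw [uIcc_of_le hab]; exact uIcc_subset_Icc hx (Ioo_subset_Icc_self ht)))
      ((hg.mono Ioo_subset_Icc_self).stronglyMeasurableAtFilter isOpen_Ioo t ht)
      (hg.continuousAt (Icc_mem_nhds ht.1 ht.2))
  rw [← uIcc_of_le hab] at hf hg hx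
  rw [integral_mul_deriv_eq_deriv_mul_of_hasDerivAt
    (fun t ht => (hf t ht).continuousAt.continuousWithinAt)
    (continuousOn_primitive_interval' hgi hx)
    (fun t ht => hf t (Ioo_subset_Icc_self ht)) hG hf' hgi, integral_symm x a]
  ring

theorem abs_sub_integral_mul_le {M : ℝ} (hx : x ∈ Icc a b)
    (hf : ∀ t ∈ Icc a b, HasDerivAt f (f' t) t) (hf' : IntervalIntegrable f' volume a b)
    (hg : ContinuousOn g (Icc a b)) (hM : ∀ t ∈ Icc a b, |g t| ≤ M) :
    |f a * (∫ s in a..x, g s) + f b * (∫ s in x..b, g s) - ∫ s in a..b, f s * g s|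
      ≤ M * ∫ t in a..b, |t - x| * |f' t| := by
  have hab : a ≤ b := hx.1.trans hx.2
  have hG_le : ∀ t ∈ Icc a b, |∫ s in x..t, g s| ≤ M * |t - x| := fun t ht =>
    intervalIntegral.norm_integral_le_of_norm_le_const (f := g) fun s hs =>
      hM s (uIcc_subset_Icc hx ht (uIoc_subset_uIcc hs))
  have hG_cont : ContinuousOn (fun t => ∫ s in x..t, g s) (uIcc a b) :=
    continuousOn_primitive_interval' (hg.intervalIntegrable_of_Icc hab) (by rwa [uIcc_of_le hab])
  rw [sub_integral_mul_eq_integral_deriv_mul hx hf hf' hg, ← intervalIntegral.integral_const_mul]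
  refine (abs_integral_le_integral_abs hab).trans (integral_mono_on hab
    (hf'.mul_continuousOn hG_cont).abs ?_ fun t ht => ?_)
  · exact (hf'.abs.continuousOn_mul (by fun_prop)).const_mul M
  · rw [abs_mul, mul_comm |f' t|, ← mul_assoc]
    exact mul_le_mul_of_nonneg_right (hG_le t ht) (abs_nonneg _)

theorem integral_abs_sub_mul_abs_le {q : ℝ} (hab : a < b) (hq : 1 ≤ q)
    (hf' : IntervalIntegrable f' volume a b) (hconv : ConvexOn ℝ (Icc a b) fun t => |f' t| ^ q)
    (hx : x ∈ Icc a b) :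
    ∫ t in a..b, |t - x| * |f' t|
      ≤ (((x - a) ^ 2 + (b - x) ^ 2) / 2) ^ ((q - 1) / q) *
        (((x - a) ^ 2 * (3 * b - x - 2 * a) + (b - x) ^ 3) / (6 * (b - a)) * |f' a| ^ q
          + ((x - a) ^ 3 + (b - x) ^ 2 * (2 * b + x - 3 * a)) / (6 * (b - a)) * |f' b| ^ q)
          ^ (1 / q) := by
  set chord := fun t => ((b - t) * |f' a| ^ q + (t - a) * |f' b| ^ q) / (b - a)
  have hw_cont : Continuous fun t => |t - x| := by fun_prop
  have hchord_cont : Continuous fun t => |t - x| * chord t := by fun_prop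
  have hf'_meas : AEStronglyMeasurable f' (volume.restrict (Ioc a b)) :=
    (hf'.1).aestronglyMeasurable
  have hint : IntegrableOn (fun t => |t - x| * |f' t| ^ q) (Ioc a b) := by
    refine hchord_cont.integrableOn_Ioc.mono' ?_ ?_
    · exact (hw_cont.aemeasurable.mul (hf'_meas.aemeasurable.abs.pow_const q)).aestronglyMeasurable
    · refine (ae_restrict_iff' measurableSet_Ioc).2 (ae_of_all _ fun t ht => ?_)
      rw [Real.norm_of_nonneg (by positivity)]
      exact mul_le_mul_of_nonneg_left (hconv.le_chord hab (Ioc_subset_Icc_self ht)) (abs_nonneg _)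
  calc ∫ t in a..b, |t - x| * |f' t|
      ≤ (∫ t in a..b, |t - x|) ^ ((q - 1) / q) * (∫ t in a..b, |t - x| * |f' t| ^ q) ^ (1 / q) := by
        simp only [integral_of_le hab.le]
        exact integral_mul_le_weighted_Lq_of_nonneg hq (ae_of_all _ fun _ => abs_nonneg _)
          (ae_of_all _ fun _ => abs_nonneg _) hw_cont.integrableOn_Ioc hf'_meas.norm hint
    _ ≤ (((x - a) ^ 2 + (b - x) ^ 2) / 2) ^ ((q - 1) / q) *
          (∫ t in a..b, |t - x| * chord t) ^ (1 / q) := by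
        rw [integral_abs_sub hx]
        gcongr
        · exact integral_nonneg hab.le fun t _ => by positivity
        · exact integral_mono_on hab.le
            ((intervalIntegrable_iff_integrableOn_Ioc_of_le hab.le).2 hint)
            (hchord_cont.intervalIntegrable _ _)
            fun t ht => mul_le_mul_of_nonneg_left (hconv.le_chord hab ht) (abs_nonneg _)
    _ = _ := by rw [integral_abs_sub_mul_chord hab hx]

theorem abs_le_sSup_image_abs (hg : ContinuousOn g (Icc a b)) {t : ℝ} (ht : t ∈ Icc a b) :
    |g t| ≤ sSup ((fun t => |g t|) '' Icc a b) :=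
  le_csSup (isCompact_Icc.bddAbove_image hg.abs) (mem_image_of_mem _ ht)

theorem stmt_3_general (f f' g : ℝ → ℝ) (a b q : ℝ) (hab : a < b) (hq : 1 ≤ q)
    (I : Set ℝ) (hIab : Icc a b ⊆ I)
    (hf : ∀ t ∈ I, HasDerivAt f (f' t) t)
    (hf' : IntervalIntegrable f' volume a b)
    (hconv : ConvexOn ℝ (Icc a b) (fun t => |f' t| ^ q))
    (hg : ContinuousOn g (Icc a b))
    (x : ℝ) (hx : x ∈ Icc a b) :
    |f a * (∫ s in a..x, g s) + f b * (∫ s in x..b, g s) - ∫ s in a..b, f s * g s|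
      ≤ sSup ((fun t => |g t|) '' Icc a b) *
        (((x - a) ^ 2 + (b - x) ^ 2) / 2) ^ ((q - 1) / q) *
        (((x - a) ^ 2 * (3 * b - x - 2 * a) + (b - x) ^ 3) / (6 * (b - a)) * |f' a| ^ q
          + ((x - a) ^ 3 + (b - x) ^ 2 * (2 * b + x - 3 * a)) / (6 * (b - a)) * |f' b| ^ q)
          ^ (1 / q) := by
  have hM : ∀ t ∈ Icc a b, |g t| ≤ sSup ((fun t => |g t|) '' Icc a b) :=
    fun t ht => abs_le_sSup_image_abs hg ht
  rw [mul_assoc]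
  exact (abs_sub_integral_mul_le hx (fun t ht => hf t (hIab ht)) hf' hg hM).trans
    (mul_le_mul_of_nonneg_left (integral_abs_sub_mul_abs_le hab hq hf' hconv hx)
      ((abs_nonneg _).trans (hM a (left_mem_Icc.2 hab.le))))

theorem stmt_3 (f f' g : ℝ → ℝ) (a b q : ℝ) (hab : a < b) (hq : 1 ≤ q)
    (I : Set ℝ) (hI : IsOpen I) (hIab : Icc a b ⊆ I)
    (hf : ∀ t ∈ I, HasDerivAt f (f' t) t)
    (hf' : IntervalIntegrable f' volume a b)
    (hconv : ConvexOn ℝ (Icc a b) (fun t => |f' t| ^ q))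
    (hg : ContinuousOn g (Icc a b))
    (x : ℝ) (hx : x ∈ Icc a b) :
    |f a * (∫ s in a..x, g s) + f b * (∫ s in x..b, g s) - ∫ s in a..b, f s * g s|
      ≤ sSup ((fun t => |g t|) '' Icc a b) *
        (((x - a) ^ 2 + (b - x) ^ 2) / 2) ^ ((q - 1) / q) *
        (((x - a) ^ 2 * (3 * b - x - 2 * a) + (b - x) ^ 3) / (6 * (b - a)) * |f' a| ^ q
          + ((x - a) ^ 3 + (b - x) ^ 2 * (2 * b + x - 3 * a)) / (6 * (b - a)) * |f' b| ^ q)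
          ^ (1 / q) :=
  stmt_3_general f f' g a b q hab hq I hIab hf hf' hconv hg x hx
end

section
/- Let f be differentiable on an open interval containing [a,b] with a < b, f' ∈ L[a,b], q ≥ 1, |f'|^q convex on [a,b], and g : [a,b] → ℝ continuous and symmetric about (a+b)/2 (i.e., g(a+b−s) = g(s)). Then |((f(a)+f(b))/2)·∫_a^b g(s) ds − ∫_a^b f(s)g(s) ds| ≤ ‖g‖_∞ · ((b−a)²/4) · [(|f'(a)|^q + |f'(b)|^q)/2]^{1/q}. -/
/-!
Put `p(s) = ½ ∫_{a+b-s}^s g` (`midpointKernel`). By the symmetry of `g`, `p' = g` on `[a, b]`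
and `p(b) = -p(a) = ½ ∫_a^b g`, so integration by parts turns the left-hand side into
`∫_a^b f' p`. The kernel is odd about the midpoint and `|p(s)| ≤ ‖g‖_∞ |s - (a+b)/2|`; pairing
`s` with `a + b - s`, convexity of `|f'|^q` and the power-mean inequality give
`|f'(s)| + |f'(a+b-s)| ≤ 2 [(|f'(a)|^q + |f'(b)|^q)/2]^{1/q}`, and
`∫_a^b |a + b - 2s| = (b-a)²/2`.
-/

open MeasureTheory Set intervalIntegral

lemma add_le_two_mul_rpow_mean {x y q : ℝ} (hx : 0 ≤ x) (hy : 0 ≤ y) (hq : 1 ≤ q) :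
    x + y ≤ 2 * ((x ^ q + y ^ q) / 2) ^ (1 / q) := by
  have hq0 : 0 < q := zero_lt_one.trans_le hq
  have hmid : ((x + y) / 2) ^ q ≤ (x ^ q + y ^ q) / 2 := by
    calc ((x + y) / 2) ^ q = ((1 / 2 : ℝ) • x + (1 / 2 : ℝ) • y) ^ q := by
          rw [smul_eq_mul, smul_eq_mul]; ring_nf
      _ ≤ (1 / 2 : ℝ) • x ^ q + (1 / 2 : ℝ) • y ^ q :=
          (convexOn_rpow hq).2 hx hy (by norm_num) (by norm_num) (by norm_num)
      _ = (x ^ q + y ^ q) / 2 := by rw [smul_eq_mul, smul_eq_mul]; ring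
  calc x + y = 2 * (((x + y) / 2) ^ q) ^ (1 / q) := by
        rw [← Real.rpow_mul (by positivity), mul_one_div_cancel hq0.ne', Real.rpow_one]; ring
    _ ≤ 2 * ((x ^ q + y ^ q) / 2) ^ (1 / q) := by gcongr

section Reflection

variable {a b s : ℝ}

lemma add_sub_mem_Icc (hs : s ∈ Icc a b) : a + b - s ∈ Icc a b :=
  ⟨by linarith [hs.2], by linarith [hs.1]⟩

lemma ConvexOn.apply_add_apply_add_sub_le {φ : ℝ → ℝ} (hφ : ConvexOn ℝ (Icc a b) φ)
    (hs : s ∈ Icc a b) : φ s + φ (a + b - s) ≤ φ a + φ b := by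
  rcases (hs.1.trans hs.2).eq_or_lt with rfl | hab
  · obtain rfl : s = a := le_antisymm hs.2 hs.1
    simp
  have ha : a ∈ Icc a b := left_mem_Icc.2 hab.le
  have hb : b ∈ Icc a b := right_mem_Icc.2 hab.le
  set t := (b - s) / (b - a)
  have ht₀ : 0 ≤ t := div_nonneg (by linarith [hs.2]) (by linarith)
  have ht₁ : 0 ≤ 1 - t := by
    rw [sub_nonneg, div_le_one (by linarith)]; linarith [hs.1]
  have h₁ := hφ.2 ha hb ht₀ ht₁ (add_sub_cancel t 1)
  have h₂ := hφ.2 ha hb ht₁ ht₀ (sub_add_cancel 1 t)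
  have e₁ : t • a + (1 - t) • b = s := by
    simp only [smul_eq_mul, t]; field_simp; ring
  have e₂ : (1 - t) • a + t • b = a + b - s := by
    simp only [smul_eq_mul, t]; field_simp; ring
  rw [e₁] at h₁
  rw [e₂] at h₂
  simp only [smul_eq_mul] at h₁ h₂
  linarith

lemma ConvexOn.abs_add_abs_add_sub_le {u : ℝ → ℝ} {q : ℝ} (hq : 1 ≤ q)
    (hu : ConvexOn ℝ (Icc a b) (fun t => |u t| ^ q)) (hs : s ∈ Icc a b) :
    |u s| + |u (a + b - s)| ≤ 2 * ((|u a| ^ q + |u b| ^ q) / 2) ^ (1 / q) := by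
  refine (add_le_two_mul_rpow_mean (abs_nonneg _) (abs_nonneg _) hq).trans ?_
  refine mul_le_mul_of_nonneg_left (Real.rpow_le_rpow (by positivity) ?_ (by positivity)) two_pos.le
  linarith [hu.apply_add_apply_add_sub_le hs]

lemma IntervalIntegrable.comp_add_sub {h : ℝ → ℝ} (hh : IntervalIntegrable h volume a b) :
    IntervalIntegrable (fun s => h (a + b - s)) volume a b := by
  simpa using (hh.comp_sub_left (a + b)).symm

lemma intervalIntegral.integral_add_comp_add_sub {h : ℝ → ℝ}
    (hh : IntervalIntegrable h volume a b) :
    ∫ s in a..b, (h s + h (a + b - s)) = 2 * ∫ s in a..b, h s := by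
  have hrefl : ∫ s in a..b, h (a + b - s) = ∫ s in a..b, h s := by
    simp [integral_comp_sub_left h (a + b)]
  rw [integral_add hh hh.comp_add_sub, hrefl]
  ring

lemma integral_abs_add_sub_two_mul (hab : a ≤ b) :
    ∫ s in a..b, |a + b - 2 * s| = (b - a) ^ 2 / 2 := by
  have hcont : Continuous fun s : ℝ => |a + b - 2 * s| := by fun_prop
  rw [← integral_add_adjacent_intervals (b := (a + b) / 2) (hcont.intervalIntegrable _ _)
    (hcont.intervalIntegrable _ _)]
  have hleft :
      ∫ s in a..(a + b) / 2, |a + b - 2 * s| = ∫ s in a..(a + b) / 2, (a + b - 2 * s) := by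
    refine integral_congr fun s hs => abs_of_nonneg ?_
    rw [uIcc_of_le (by linarith)] at hs
    linarith [hs.2]
  have hright :
      ∫ s in (a + b) / 2..b, |a + b - 2 * s| = ∫ s in (a + b) / 2..b, (2 * s - (a + b)) := by
    refine integral_congr fun s hs => ?_
    rw [uIcc_of_le (by linarith)] at hs
    rw [abs_of_nonpos (by linarith [hs.1])]
    ring
  rw [hleft, hright]
  have hlin : Continuous fun s : ℝ => 2 * s := by fun_prop
  rw [intervalIntegral.integral_sub intervalIntegrable_const (hlin.intervalIntegrable _ _),
    intervalIntegral.integral_sub (hlin.intervalIntegrable _ _) intervalIntegrable_const]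
  simp only [intervalIntegral.integral_const, smul_eq_mul]
  rw [intervalIntegral.integral_const_mul, intervalIntegral.integral_const_mul, integral_id,
    integral_id]
  ring

end Reflection

noncomputable def midpointKernel (g : ℝ → ℝ) (a b s : ℝ) : ℝ :=
  (∫ t in (a + b - s)..s, g t) / 2

section MidpointKernel

variable {g : ℝ → ℝ} {a b s : ℝ}

lemma midpointKernel_add_sub : midpointKernel g a b (a + b - s) = -midpointKernel g a b s := by
  rw [midpointKernel, midpointKernel, sub_sub_cancel, integral_symm, neg_div]

lemma midpointKernel_left : midpointKernel g a b a = -(∫ t in a..b, g t) / 2 := by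
  rw [midpointKernel, add_sub_cancel_left, integral_symm]

lemma midpointKernel_right : midpointKernel g a b b = (∫ t in a..b, g t) / 2 := by
  rw [midpointKernel, add_sub_cancel_right]

lemma abs_midpointKernel_le {G : ℝ} (hG : ∀ t ∈ Icc a b, |g t| ≤ G) (hs : s ∈ Icc a b) :
    |midpointKernel g a b s| ≤ G / 2 * |a + b - 2 * s| := by
  have hsub : uIoc (a + b - s) s ⊆ Icc a b :=
    uIoc_subset_uIcc.trans (uIcc_subset_Icc (add_sub_mem_Icc hs) hs)
  have h := norm_integral_le_of_norm_le_const fun t ht =>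
    (Real.norm_eq_abs (g t)).trans_le (hG t (hsub ht))
  rw [Real.norm_eq_abs] at h
  rw [midpointKernel, abs_div, abs_two, abs_sub_comm (a + b),
    show 2 * s - (a + b) = s - (a + b - s) by ring]
  linarith

lemma hasDerivAt_midpointKernel (hg : Continuous g) (s : ℝ) :
    HasDerivAt (midpointKernel g a b) ((g s + g (a + b - s)) / 2) s := by
  have hprim : ∀ x, HasDerivAt (fun u => ∫ t in (0 : ℝ)..u, g t) (g x) x := fun x =>
    (hg.integral_hasStrictDerivAt 0 x).hasDerivAt
  have hreflect : HasDerivAt (fun u => a + b - u) (-1) s := (hasDerivAt_id s).const_sub (a + b)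
  have hdiff : midpointKernel g a b =
      fun u => ((∫ t in (0 : ℝ)..u, g t) - ∫ t in (0 : ℝ)..(a + b - u), g t) / 2 := by
    ext u
    rw [midpointKernel, integral_interval_sub_left (hg.intervalIntegrable _ _)
      (hg.intervalIntegrable _ _)]
  rw [hdiff]
  exact (((hprim s).sub ((hprim (a + b - s)).comp s hreflect)).div_const 2).congr_deriv (by ring)

lemma continuous_midpointKernel (hg : Continuous g) : Continuous (midpointKernel g a b) :=
  continuous_iff_continuousAt.2 fun s => (hasDerivAt_midpointKernel hg s).continuousAt

end MidpointKernel

theorem trapezoid_sub_integral_mul_eq_integral_deriv_mul_midpointKernel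
    {f f' g : ℝ → ℝ} {a b : ℝ}
    (hf : ∀ t ∈ uIcc a b, HasDerivAt f (f' t) t) (hf' : IntervalIntegrable f' volume a b)
    (hg : Continuous g) (hsym : ∀ s ∈ uIcc a b, g (a + b - s) = g s) :
    (f a + f b) / 2 * (∫ s in a..b, g s) - ∫ s in a..b, f s * g s =
      ∫ s in a..b, f' s * midpointKernel g a b s := by
  have hparts := integral_mul_deriv_eq_deriv_mul hf
    (fun s _ => hasDerivAt_midpointKernel (a := a) (b := b) hg s) hf'
    (Continuous.intervalIntegrable (by fun_prop) a b)
  have hderiv : ∫ s in a..b, f s * ((g s + g (a + b - s)) / 2) = ∫ s in a..b, f s * g s :=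
    integral_congr fun s hs => by rw [hsym s hs, add_self_div_two]
  rw [← hderiv, hparts, midpointKernel_left, midpointKernel_right]
  ring

theorem abs_integral_mul_le_of_abs_add_sub_le {u v : ℝ → ℝ} {a b C M : ℝ} (hab : a ≤ b)
    (hu : IntervalIntegrable u volume a b) (hv : ContinuousOn v (Icc a b))
    (hv_reflect : ∀ s ∈ Icc a b, |v (a + b - s)| = |v s|)
    (hv_le : ∀ s ∈ Icc a b, |v s| ≤ C * |a + b - 2 * s|)
    (hu_le : ∀ s ∈ Icc a b, |u s| + |u (a + b - s)| ≤ 2 * M) :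
    |∫ s in a..b, u s * v s| ≤ C * M * (b - a) ^ 2 / 2 := by
  have huv : IntervalIntegrable (fun s => |u s * v s|) volume a b :=
    (hu.mul_continuousOn (by rwa [uIcc_of_le hab])).abs
  have hpointwise : ∀ s ∈ Icc a b,
      |u s * v s| + |u (a + b - s) * v (a + b - s)| ≤ 2 * C * M * |a + b - 2 * s| := by
    intro s hs
    rw [abs_mul, abs_mul, hv_reflect s hs, ← add_mul]
    calc (|u s| + |u (a + b - s)|) * |v s| ≤ 2 * M * (C * |a + b - 2 * s|) :=
          mul_le_mul (hu_le s hs) (hv_le s hs) (abs_nonneg _)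
            ((add_nonneg (abs_nonneg _) (abs_nonneg _)).trans (hu_le s hs))
      _ = 2 * C * M * |a + b - 2 * s| := by ring
  calc |∫ s in a..b, u s * v s| ≤ ∫ s in a..b, |u s * v s| := abs_integral_le_integral_abs hab
    _ = (∫ s in a..b, (|u s * v s| + |u (a + b - s) * v (a + b - s)|)) / 2 := by
        rw [integral_add_comp_add_sub huv]; ring
    _ ≤ (∫ s in a..b, 2 * C * M * |a + b - 2 * s|) / 2 := by
        gcongr
        exact integral_mono_on hab (huv.add huv.comp_add_sub)
          (Continuous.intervalIntegrable (by fun_prop) _ _) hpointwise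
    _ = C * M * (b - a) ^ 2 / 2 := by
        rw [intervalIntegral.integral_const_mul, integral_abs_add_sub_two_mul hab]; ring

theorem stmt_4_general (f f' g : ℝ → ℝ) (a b q : ℝ) (hab : a < b) (hq : 1 ≤ q)
    (I : Set ℝ) (hIab : Icc a b ⊆ I)
    (hf : ∀ t ∈ I, HasDerivAt f (f' t) t)
    (hf' : IntervalIntegrable f' volume a b)
    (hconv : ConvexOn ℝ (Icc a b) (fun t => |f' t| ^ q))
    (hg : ContinuousOn g (Icc a b))
    (hsym : ∀ s ∈ Icc a b, g (a + b - s) = g s) :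
    |(f a + f b) / 2 * (∫ s in a..b, g s) - ∫ s in a..b, f s * g s|
      ≤ sSup ((fun t => |g t|) '' Icc a b) * ((b - a) ^ 2 / 4) *
        ((|f' a| ^ q + |f' b| ^ q) / 2) ^ (1 / q) := by
  set G := sSup ((fun t => |g t|) '' Icc a b)
  have hG : ∀ t ∈ Icc a b, |g t| ≤ G := fun t ht =>
    le_csSup (isCompact_Icc.image_of_continuousOn hg.abs).bddAbove ⟨t, ht, rfl⟩
  set g₀ := IccExtend hab.le ((Icc a b).domRestrict g)
  have hg₀c : Continuous g₀ := hg.domRestrict.Icc_extend'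
  have hg₀ : EqOn g₀ g (Icc a b) := fun t ht => IccExtend_of_mem _ _ ht
  have hg₀sym : ∀ s ∈ uIcc a b, g₀ (a + b - s) = g₀ s := by
    rw [uIcc_of_le hab.le]
    intro s hs
    rw [hg₀ hs, hg₀ (add_sub_mem_Icc hs), hsym s hs]
  have hgg₀ : EqOn g g₀ (uIcc a b) := by rw [uIcc_of_le hab.le]; exact hg₀.symm
  rw [integral_congr hgg₀, integral_congr fun s hs => congrArg (f s * ·) (hgg₀ hs),
    trapezoid_sub_integral_mul_eq_integral_deriv_mul_midpointKernel
      (fun t ht => hf t (hIab (uIcc_of_le hab.le ▸ ht))) hf' hg₀c hg₀sym]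
  calc _ ≤ G / 2 * ((|f' a| ^ q + |f' b| ^ q) / 2) ^ (1 / q) * (b - a) ^ 2 / 2 :=
        abs_integral_mul_le_of_abs_add_sub_le hab.le hf'
          (continuous_midpointKernel hg₀c).continuousOn
          (fun s _ => by rw [midpointKernel_add_sub, abs_neg])
          (fun s => abs_midpointKernel_le fun t ht => hg₀ ht ▸ hG t ht)
          (fun s => hconv.abs_add_abs_add_sub_le hq)
    _ = _ := by ring

theorem stmt_4 (f f' g : ℝ → ℝ) (a b q : ℝ) (hab : a < b) (hq : 1 ≤ q)
    (I : Set ℝ) (hI : IsOpen I) (hIab : Icc a b ⊆ I)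
    (hf : ∀ t ∈ I, HasDerivAt f (f' t) t)
    (hf' : IntervalIntegrable f' volume a b)
    (hconv : ConvexOn ℝ (Icc a b) (fun t => |f' t| ^ q))
    (hg : ContinuousOn g (Icc a b))
    (hsym : ∀ s ∈ Icc a b, g (a + b - s) = g s) :
    |(f a + f b) / 2 * (∫ s in a..b, g s) - ∫ s in a..b, f s * g s|
      ≤ sSup ((fun t => |g t|) '' Icc a b) * ((b - a) ^ 2 / 4) *
        ((|f' a| ^ q + |f' b| ^ q) / 2) ^ (1 / q) :=
  stmt_4_general f f' g a b q hab hq I hIab hf hf' hconv hg hsym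
end

section
/- Let f be differentiable on an open interval containing [a,b] with a < b, f' ∈ L[a,b], q ≥ 1, |f'|^q convex on [a,b], and g : [a,b] → ℝ continuous. Then |f((a+b)/2)·∫_a^b g(s) ds − ∫_a^b f(s)g(s) ds| ≤ ‖g‖_∞ · ((b−a)²/4) · [(|f'(a)|^q + |f'(b)|^q)/2]^{1/q}. -/
/-!
Put `m = (a + b) / 2`. The left-hand side is `|∫ (f m - f s) g s ds| ≤ ‖g‖_∞ ∫ |f m - f s| ds`.
Convexity puts `|f'|^q` under its secant line, which takes the value
`c = (|f' a|^q + |f' b|^q) / 2` at `m`; concavity of `x ↦ x^(1/q)` (its tangent line at `c`) then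
puts `|f'|` under an affine function `c^(1/q) + β (t - m)`. Comparing `f` on `[a, m]` and on
`[m, b]` with the primitive `H` of this majorant vanishing at `m` gives
`∫ |f m - f s| ds ≤ -∫_a^m H + ∫_m^b H = (b - a)^2 / 4 · c^(1/q)`, the `β`-terms cancelling by
symmetry about `m`.
-/

open MeasureTheory Set

theorem Real.rpow_le_tangent {p x c : ℝ} (hp0 : 0 < p) (hp1 : p ≤ 1) (hx : 0 ≤ x) (hc : 0 < c) :
    x ^ p ≤ c ^ p + p * c ^ (p - 1) * (x - c) := by
  have h := Real.geom_mean_le_arith_mean2_weighted hp0.le (sub_nonneg.2 hp1) hx hc.le (by ring)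
  have hc1 : c ^ (1 - p) * c ^ (p - 1) = 1 := by
    rw [← Real.rpow_add hc]; simp
  have hcp : c ^ (p - 1) * c = c ^ p := by
    rw [← Real.rpow_add_one hc.ne']; simp
  calc x ^ p = x ^ p * c ^ (1 - p) * c ^ (p - 1) := by rw [mul_assoc, hc1, mul_one]
    _ ≤ (p * x + (1 - p) * c) * c ^ (p - 1) := by gcongr
    _ = c ^ p + p * c ^ (p - 1) * (x - c) := by rw [← hcp]; ring

theorem ConvexOn.mul_le_secant {φ : ℝ → ℝ} {a b t : ℝ} (hφ : ConvexOn ℝ (Icc a b) φ)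
    (hab : a < b) (ht : t ∈ Icc a b) : (b - a) * φ t ≤ (b - t) * φ a + (t - a) * φ b := by
  have hba : 0 < b - a := sub_pos.2 hab
  have h := hφ.2 (left_mem_Icc.2 hab.le) (right_mem_Icc.2 hab.le)
    (div_nonneg (sub_nonneg.2 ht.2) hba.le) (div_nonneg (sub_nonneg.2 ht.1) hba.le)
    (by rw [← add_div, div_eq_one_iff_eq hba.ne']; ring)
  have ht' : ((b - t) / (b - a)) • a + ((t - a) / (b - a)) • b = t := by
    simp only [smul_eq_mul]; field_simp; ring
  rw [ht', smul_eq_mul, smul_eq_mul] at h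
  calc (b - a) * φ t ≤ (b - a) * ((b - t) / (b - a) * φ a + (t - a) / (b - a) * φ b) := by
        gcongr
    _ = (b - t) * φ a + (t - a) * φ b := by field_simp

theorem abs_sub_le_sub_of_abs_deriv_le {f f' F F' : ℝ → ℝ} {x y : ℝ} (hxy : x ≤ y)
    (hf : ∀ t ∈ Icc x y, HasDerivAt f (f' t) t) (hF : ∀ t, HasDerivAt F (F' t) t)
    (bound : ∀ t ∈ Ico x y, |f' t| ≤ F' t) : |f y - f x| ≤ F y - F x := by
  have := image_norm_le_of_norm_deriv_right_le_deriv_boundary (f := fun t => f t - f x)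
    (B := fun t => F t - F x)
    (fun t ht => ((hf t ht).continuousAt.sub continuousAt_const).continuousWithinAt)
    (fun t ht => ((hf t (Ico_subset_Icc_self ht)).sub_const (f x)).hasDerivWithinAt)
    (by simp) (fun t => (hF t).sub_const (F x)) bound (right_mem_Icc.2 hxy)
  simpa using this

theorem integral_primitive_affine_around_midpoint {a b m : ℝ} (hm : a + b = 2 * m) (γ β : ℝ) :
    -(∫ s in a..m, (γ * (s - m) + β * (s - m) ^ 2 / 2)) +
      ∫ s in m..b, (γ * (s - m) + β * (s - m) ^ 2 / 2) = (b - a) ^ 2 / 4 * γ := by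
  have hG : ∀ x y, ∫ s in x..y, (γ * (s - m) + β * (s - m) ^ 2 / 2) =
      (γ * (y - m) ^ 2 / 2 + β * (y - m) ^ 3 / 6) -
        (γ * (x - m) ^ 2 / 2 + β * (x - m) ^ 3 / 6) := by
    intro x y
    have hderiv : ∀ t, HasDerivAt (fun s => γ * (s - m) ^ 2 / 2 + β * (s - m) ^ 3 / 6)
        (γ * (t - m) + β * (t - m) ^ 2 / 2) t := fun t => by
      have h := (hasDerivAt_id' t).sub_const m
      exact (((h.pow 2).const_mul γ |>.div_const 2).add
        ((h.pow 3).const_mul β |>.div_const 6)).congr_deriv (by ring)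
    exact intervalIntegral.integral_eq_sub_of_hasDerivAt (fun t _ => hderiv t)
      (Continuous.intervalIntegrable (by fun_prop) x y)
  rw [hG, hG, show b = 2 * m - a by linarith]
  ring

theorem integral_abs_sub_midpoint_le {f f' : ℝ → ℝ} {a b γ β : ℝ} (hab : a ≤ b)
    (hf : ∀ t ∈ Icc a b, HasDerivAt f (f' t) t)
    (hbound : ∀ t ∈ Icc a b, |f' t| ≤ γ + β * (t - (a + b) / 2)) :
    ∫ s in a..b, |f ((a + b) / 2) - f s| ≤ (b - a) ^ 2 / 4 * γ := by
  have ham : a ≤ (a + b) / 2 := by linarith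
  have hmb : (a + b) / 2 ≤ b := by linarith
  set m := (a + b) / 2
  set H : ℝ → ℝ := fun s => γ * (s - m) + β * (s - m) ^ 2 / 2
  have hH : ∀ t, HasDerivAt H (γ + β * (t - m)) t := by
    intro t
    have h := (hasDerivAt_id' t).sub_const m
    exact ((h.const_mul γ).add ((h.pow 2).const_mul β |>.div_const 2)).congr_deriv (by ring)
  have hfc : ContinuousOn f (Icc a b) := fun t ht => (hf t ht).continuousAt.continuousWithinAt
  have hint : ∀ x ∈ Icc a b, ∀ y ∈ Icc a b,
      IntervalIntegrable (fun s => |f m - f s|) volume x y := fun x hx y hy =>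
    ((continuousOn_const.sub hfc).abs.mono (uIcc_subset_Icc hx hy)).intervalIntegrable
  have hleft : ∫ s in a..m, |f m - f s| ≤ ∫ s in a..m, -H s := by
    refine intervalIntegral.integral_mono_on ham (hint _ ⟨le_rfl, hab⟩ _ ⟨ham, hmb⟩)
      (Continuous.intervalIntegrable (by fun_prop) a m) fun s hs => ?_
    simpa [H] using abs_sub_le_sub_of_abs_deriv_le hs.2
      (fun t ht => hf t ⟨hs.1.trans ht.1, ht.2.trans hmb⟩) hH
      (fun t ht => hbound t ⟨hs.1.trans ht.1, ht.2.le.trans hmb⟩)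
  have hright : ∫ s in m..b, |f m - f s| ≤ ∫ s in m..b, H s := by
    refine intervalIntegral.integral_mono_on hmb (hint _ ⟨ham, hmb⟩ _ ⟨hab, le_rfl⟩)
      (Continuous.intervalIntegrable (by fun_prop) m b) fun s hs => ?_
    simpa [H, abs_sub_comm] using abs_sub_le_sub_of_abs_deriv_le hs.1
      (fun t ht => hf t ⟨ham.trans ht.1, ht.2.trans hs.2⟩) hH
      (fun t ht => hbound t ⟨ham.trans ht.1, ht.2.le.trans hs.2⟩)
  calc ∫ s in a..b, |f m - f s| = (∫ s in a..m, |f m - f s|) + ∫ s in m..b, |f m - f s| :=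
        (intervalIntegral.integral_add_adjacent_intervals
          (hint _ ⟨le_rfl, hab⟩ _ ⟨ham, hmb⟩)
          (hint _ ⟨ham, hmb⟩ _ ⟨hab, le_rfl⟩)).symm
    _ ≤ -(∫ s in a..m, H s) + ∫ s in m..b, H s := by
        rw [← intervalIntegral.integral_neg]; exact add_le_add hleft hright
    _ = (b - a) ^ 2 / 4 * γ := integral_primitive_affine_around_midpoint (by ring) γ β

theorem exists_affine_majorant_of_convexOn_abs_rpow {u : ℝ → ℝ} {a b q : ℝ} (hab : a < b)
    (hq : 1 ≤ q) (hconv : ConvexOn ℝ (Icc a b) (fun t => |u t| ^ q)) :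
    ∃ β, ∀ t ∈ Icc a b,
      |u t| ≤ ((|u a| ^ q + |u b| ^ q) / 2) ^ (1 / q) + β * (t - (a + b) / 2) := by
  have hq0 : 0 < q := one_pos.trans_le hq
  have hp0 : 0 < 1 / q := by positivity
  have hp1 : 1 / q ≤ 1 := (div_le_one hq0).2 hq
  have hba : 0 < b - a := sub_pos.2 hab
  set A := |u a| ^ q
  set B := |u b| ^ q
  set c := (A + B) / 2
  set s := (B - A) / (b - a)
  refine ⟨1 / q * c ^ (1 / q - 1) * s, fun t ht => ?_⟩
  have hsec : |u t| ^ q ≤ c + s * (t - (a + b) / 2) := by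
    rw [show c + s * (t - (a + b) / 2) = ((b - t) * A + (t - a) * B) / (b - a) by
      simp only [c, s]; field_simp; ring, le_div_iff₀ hba, mul_comm]
    exact hconv.mul_le_secant hab ht
  have hroot : |u t| ≤ (c + s * (t - (a + b) / 2)) ^ (1 / q) := by
    calc |u t| = (|u t| ^ q) ^ (1 / q) := by
          rw [← Real.rpow_mul (abs_nonneg _), mul_one_div_cancel hq0.ne', Real.rpow_one]
      _ ≤ _ := by gcongr
  rcases (show 0 ≤ c by positivity).eq_or_lt with hc | hc
  · have hA : 0 ≤ A := by positivity
    have hB : 0 ≤ B := by positivity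
    have hAB : A + B = 0 := by simp only [c] at hc; linarith
    have hs : s = 0 := by
      simp only [s, show A = 0 by linarith, show B = 0 by linarith, sub_zero, zero_div]
    simpa [hs] using hroot
  · calc |u t| ≤ (c + s * (t - (a + b) / 2)) ^ (1 / q) := hroot
      _ ≤ c ^ (1 / q) + 1 / q * c ^ (1 / q - 1) * (c + s * (t - (a + b) / 2) - c) :=
          Real.rpow_le_tangent hp0 hp1 ((by positivity : (0:ℝ) ≤ |u t| ^ q).trans hsec) hc
      _ = _ := by ring

theorem abs_integral_mul_le_sSup_mul_integral_abs {φ g : ℝ → ℝ} {a b : ℝ} (hab : a ≤ b)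
    (hφ : ContinuousOn φ (Icc a b)) (hg : ContinuousOn g (Icc a b)) :
    |∫ s in a..b, φ s * g s| ≤ sSup ((fun t => |g t|) '' Icc a b) * ∫ s in a..b, |φ s| := by
  have hbdd : BddAbove ((fun t => |g t|) '' Icc a b) :=
    (isCompact_Icc.image_of_continuousOn hg.abs).bddAbove
  calc |∫ s in a..b, φ s * g s| ≤ ∫ s in a..b, |φ s * g s| :=
        intervalIntegral.abs_integral_le_integral_abs hab
    _ ≤ ∫ s in a..b, sSup ((fun t => |g t|) '' Icc a b) * |φ s| := by
        refine intervalIntegral.integral_mono_on hab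
          ((hφ.mul hg).abs.intervalIntegrable_of_Icc hab)
          ((continuousOn_const.mul hφ.abs).intervalIntegrable_of_Icc hab) fun s hs => ?_
        rw [abs_mul, mul_comm]
        gcongr
        exact le_csSup hbdd ⟨s, hs, rfl⟩
    _ = sSup ((fun t => |g t|) '' Icc a b) * ∫ s in a..b, |φ s| :=
        intervalIntegral.integral_const_mul _ _

theorem stmt_6_general (f f' g : ℝ → ℝ) (a b q : ℝ) (hab : a < b) (hq : 1 ≤ q)
    (I : Set ℝ) (hIab : Icc a b ⊆ I)
    (hf : ∀ t ∈ I, HasDerivAt f (f' t) t)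
    (hconv : ConvexOn ℝ (Icc a b) (fun t => |f' t| ^ q))
    (hg : ContinuousOn g (Icc a b)) :
    |f ((a + b) / 2) * (∫ s in a..b, g s) - ∫ s in a..b, f s * g s|
      ≤ sSup ((fun t => |g t|) '' Icc a b) * ((b - a) ^ 2 / 4) *
        ((|f' a| ^ q + |f' b| ^ q) / 2) ^ (1 / q) := by
  have hderiv : ∀ t ∈ Icc a b, HasDerivAt f (f' t) t := fun t ht => hf t (hIab ht)
  have hfc : ContinuousOn f (Icc a b) := fun t ht => (hderiv t ht).continuousAt.continuousWithinAt
  obtain ⟨β, hβ⟩ := exists_affine_majorant_of_convexOn_abs_rpow hab hq hconv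
  have hdiff : f ((a + b) / 2) * (∫ s in a..b, g s) - ∫ s in a..b, f s * g s
      = ∫ s in a..b, (f ((a + b) / 2) - f s) * g s := by
    have hfmg : IntervalIntegrable (fun s => f ((a + b) / 2) * g s) volume a b :=
      (continuousOn_const.mul hg).intervalIntegrable_of_Icc hab.le
    have hfg : IntervalIntegrable (fun s => f s * g s) volume a b :=
      (hfc.mul hg).intervalIntegrable_of_Icc hab.le
    simp only [sub_mul]
    rw [intervalIntegral.integral_sub hfmg hfg, intervalIntegral.integral_const_mul]
  rw [hdiff]
  calc _ ≤ sSup ((fun t => |g t|) '' Icc a b) * ∫ s in a..b, |f ((a + b) / 2) - f s| :=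
        abs_integral_mul_le_sSup_mul_integral_abs hab.le (continuousOn_const.sub hfc) hg
    _ ≤ sSup ((fun t => |g t|) '' Icc a b) *
          ((b - a) ^ 2 / 4 * ((|f' a| ^ q + |f' b| ^ q) / 2) ^ (1 / q)) := by
        gcongr
        · exact Real.sSup_nonneg fun _ ⟨_, _, hx⟩ => hx ▸ abs_nonneg _
        · exact integral_abs_sub_midpoint_le hab.le hderiv hβ
    _ = _ := by ring

theorem stmt_6 (f f' g : ℝ → ℝ) (a b q : ℝ) (hab : a < b) (hq : 1 ≤ q)
    (I : Set ℝ) (hI : IsOpen I) (hIab : Icc a b ⊆ I)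
    (hf : ∀ t ∈ I, HasDerivAt f (f' t) t)
    (hf' : IntervalIntegrable f' volume a b)
    (hconv : ConvexOn ℝ (Icc a b) (fun t => |f' t| ^ q))
    (hg : ContinuousOn g (Icc a b)) :
    |f ((a + b) / 2) * (∫ s in a..b, g s) - ∫ s in a..b, f s * g s|
      ≤ sSup ((fun t => |g t|) '' Icc a b) * ((b - a) ^ 2 / 4) *
        ((|f' a| ^ q + |f' b| ^ q) / 2) ^ (1 / q) :=
  stmt_6_general f f' g a b q hab hq I hIab hf hconv hg
end

section
/- For a < b, α > 0, and x ∈ [a,b]: ∫_a^b |t−x|·((b−t)/(b−a))^α dt = [(b−a)^{α+1}(2x−b−a+α(x−a)) + 2(b−x)^{α+2}] / [(α+1)(α+2)(b−a)^α]. -/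
open MeasureTheory Set

namespace Real

lemma rpow_add_one_of_add_one_ne_zero (x : ℝ) {y : ℝ} (hy : y + 1 ≠ 0) :
    x ^ (y + 1) = x ^ y * x := by
  rcases eq_or_ne x 0 with rfl | hx
  · rw [zero_rpow hy, mul_zero]
  · exact rpow_add_one hx y

end Real

lemma integral_sub_mul_rpow (u v c : ℝ) {r : ℝ} (hr : -1 < r) :
    ∫ s in u..v, (s - c) * s ^ r
      = (v ^ (r + 2) - u ^ (r + 2)) / (r + 2) - c * ((v ^ (r + 1) - u ^ (r + 1)) / (r + 1)) := by
  have hr1 : r + 1 ≠ 0 := by linarith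
  have expand : (fun s : ℝ => (s - c) * s ^ r) = fun s => s ^ (r + 1) - c * s ^ r := by
    ext s
    rw [Real.rpow_add_one_of_add_one_ne_zero s hr1]
    ring
  rw [expand, intervalIntegral.integral_sub
      (intervalIntegral.intervalIntegrable_rpow' (by linarith))
      ((intervalIntegral.intervalIntegrable_rpow' hr).const_mul c),
    intervalIntegral.integral_const_mul, integral_rpow (Or.inl hr),
    integral_rpow (Or.inl (by linarith)), add_assoc r 1 1, one_add_one_eq_two]

lemma integral_abs_sub_mul_rpow {c L r : ℝ} (hc : 0 ≤ c) (hcL : c ≤ L) (hr : -1 < r) :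
    ∫ s in (0 : ℝ)..L, |c - s| * s ^ r
      = (L ^ (r + 1) * ((r + 1) * L - (r + 2) * c) + 2 * c ^ (r + 2)) / ((r + 1) * (r + 2)) := by
  have hr1 : r + 1 ≠ 0 := by linarith
  have hr2 : r + 2 ≠ 0 := by linarith
  have rpow_add_two (y : ℝ) : y ^ (r + 2) = y ^ (r + 1) * y := by
    rw [← Real.rpow_add_one_of_add_one_ne_zero y (by linarith), add_assoc, one_add_one_eq_two]
  have hint (u v : ℝ) : IntervalIntegrable (fun s => |c - s| * s ^ r) volume u v :=
    (intervalIntegral.intervalIntegrable_rpow' hr).continuousOn_mul (by fun_prop)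
  have left : ∫ s in (0 : ℝ)..c, |c - s| * s ^ r = -∫ s in (0 : ℝ)..c, (s - c) * s ^ r := by
    rw [← intervalIntegral.integral_neg]
    refine intervalIntegral.integral_congr fun s hs => ?_
    rw [uIcc_of_le hc] at hs
    simp only [abs_of_nonneg (sub_nonneg.2 hs.2)]
    ring
  have right : ∫ s in c..L, |c - s| * s ^ r = ∫ s in c..L, (s - c) * s ^ r := by
    refine intervalIntegral.integral_congr fun s hs => ?_
    rw [uIcc_of_le hcL] at hs
    simp only [abs_sub_comm c s, abs_of_nonneg (sub_nonneg.2 hs.1)]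
  rw [← intervalIntegral.integral_add_adjacent_intervals (hint 0 c) (hint c L), left, right,
    integral_sub_mul_rpow _ _ _ hr, integral_sub_mul_rpow _ _ _ hr,
    Real.zero_rpow hr1, Real.zero_rpow hr2, rpow_add_two L, rpow_add_two c]
  field_simp
  ring

theorem stmt_11 (a b x α : ℝ) (hab : a < b) (hα : 0 < α) (hx : x ∈ Icc a b) :
    ∫ t in a..b, |t - x| * ((b - t) / (b - a)) ^ α
      = ((b - a) ^ (α + 1) * (2 * x - b - a + α * (x - a)) + 2 * (b - x) ^ (α + 2)) /
        ((α + 1) * (α + 2) * (b - a) ^ α) := by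
  obtain ⟨hax, hxb⟩ := hx
  have scale : ∫ t in a..b, |t - x| * ((b - t) / (b - a)) ^ α
      = (∫ t in a..b, |t - x| * (b - t) ^ α) / (b - a) ^ α := by
    rw [← intervalIntegral.integral_div]
    refine intervalIntegral.integral_congr fun t ht => ?_
    rw [uIcc_of_le hab.le] at ht
    rw [Real.div_rpow (by linarith [ht.2]) (by linarith), mul_div_assoc]
  have reflect : ∫ t in a..b, |t - x| * (b - t) ^ α
      = ∫ s in (0 : ℝ)..b - a, |(b - x) - s| * s ^ α := by
    rw [← sub_self b, ← intervalIntegral.integral_comp_sub_left]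
    simp only [sub_sub_sub_cancel_left, abs_sub_comm]
  rw [scale, reflect, integral_abs_sub_mul_rpow (by linarith) (by linarith) (by linarith), div_div]
  ring
end

section
/- Let f be differentiable on an open interval containing [a,b] with a < b, f' bounded and integrable on [a,b], and g : [a,b] → ℝ continuous. Then for all x ∈ [a,b]: |f(a)∫_a^x g + f(b)∫_x^b g − ∫_a^b fg| ≤ ‖g‖_∞ · ∫_a^b |t−x|·|f'(t)| dt. -/
/-!
Integrating `f * g` by parts against the primitive `G t = ∫ s in x..t, g s`, which vanishes at
`x`, turns the left-hand side into `∫ t in a..b, f' t * G t`, and `|G t| ≤ ‖g‖_∞ * |t - x|`.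
-/

open MeasureTheory Set

theorem boundary_sub_integral_mul_eq_integral_deriv_mul_primitive {f f' g : ℝ → ℝ} {a b x : ℝ}
    (hf : ∀ t ∈ uIcc a b, HasDerivAt f (f' t) t) (hf' : IntervalIntegrable f' volume a b)
    (hg : ContinuousOn g (uIcc a b)) (hx : x ∈ uIcc a b) :
    f a * (∫ s in a..x, g s) + f b * (∫ s in x..b, g s) - ∫ s in a..b, f s * g s
      = ∫ t in a..b, f' t * ∫ s in x..t, g s := by
  have hG : ∀ t ∈ Ioo (min a b) (max a b), HasDerivAt (fun t => ∫ s in x..t, g s) (g t) t :=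
    fun t ht => intervalIntegral.integral_hasDerivAt_right
      (hg.mono (uIcc_subset_uIcc hx (Ioo_subset_Icc_self ht))).intervalIntegrable
      (hg.mono Ioo_subset_Icc_self |>.stronglyMeasurableAtFilter isOpen_Ioo t ht)
      (hg.continuousAt (Icc_mem_nhds ht.1 ht.2))
  rw [intervalIntegral.integral_mul_deriv_eq_deriv_mul_of_hasDerivAt
    (fun t ht => (hf t ht).continuousAt.continuousWithinAt)
    (intervalIntegral.continuousOn_primitive_interval' hg.intervalIntegrable hx)
    (fun t ht => hf t (Ioo_subset_Icc_self ht)) hG hf' hg.intervalIntegrable,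
    intervalIntegral.integral_symm a x]
  ring

theorem abs_integral_le_mul_abs_sub {g : ℝ → ℝ} {a b x t M : ℝ}
    (hg : ∀ s ∈ uIcc a b, |g s| ≤ M) (hx : x ∈ uIcc a b) (ht : t ∈ uIcc a b) :
    |∫ s in x..t, g s| ≤ M * |t - x| :=
  intervalIntegral.norm_integral_le_of_norm_le_const (f := g) fun s hs =>
    hg s (uIcc_subset_uIcc hx ht (uIoc_subset_uIcc hs))

theorem abs_integral_mul_le_integral_mul_abs {u v w : ℝ → ℝ} {a b : ℝ} (hab : a ≤ b)
    (hu : IntervalIntegrable u volume a b) (hv : ContinuousOn v (uIcc a b))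
    (hw : IntervalIntegrable (fun t => w t * |u t|) volume a b)
    (hvw : ∀ t ∈ uIcc a b, |v t| ≤ w t) :
    |∫ t in a..b, u t * v t| ≤ ∫ t in a..b, w t * |u t| := by
  have huv : IntervalIntegrable (fun t => |u t * v t|) volume a b :=
    (hu.mul_continuousOn hv).abs
  calc |∫ t in a..b, u t * v t| ≤ ∫ t in a..b, |u t * v t| :=
        intervalIntegral.abs_integral_le_integral_abs hab
    _ ≤ ∫ t in a..b, w t * |u t| :=
        intervalIntegral.integral_mono_on hab huv hw fun t ht => by
          rw [abs_mul, mul_comm]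
          exact mul_le_mul_of_nonneg_right (hvw t (uIcc_of_le hab ▸ ht)) (abs_nonneg _)

theorem stmt_18_general (f f' g : ℝ → ℝ) (a b : ℝ) (hab : a < b)
    (I : Set ℝ) (hIab : Icc a b ⊆ I)
    (hf : ∀ t ∈ I, HasDerivAt f (f' t) t)
    (hf' : IntervalIntegrable f' volume a b)
    (hg : ContinuousOn g (Icc a b))
    (x : ℝ) (hx : x ∈ Icc a b) :
    |f a * (∫ s in a..x, g s) + f b * (∫ s in x..b, g s) - ∫ s in a..b, f s * g s|
      ≤ sSup ((fun t => |g t|) '' Icc a b) * ∫ t in a..b, |t - x| * |f' t| := by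
  set M := sSup ((fun t => |g t|) '' Icc a b)
  have hM : ∀ t ∈ Icc a b, |g t| ≤ M := fun t ht =>
    le_csSup (isCompact_Icc.bddAbove_image hg.abs) (mem_image_of_mem _ ht)
  rw [← uIcc_of_le hab.le] at hIab hg hx hM
  rw [boundary_sub_integral_mul_eq_integral_deriv_mul_primitive
    (fun t ht => hf t (hIab ht)) hf' hg hx, ← intervalIntegral.integral_const_mul]
  simp_rw [← mul_assoc]
  exact abs_integral_mul_le_integral_mul_abs hab.le hf'
    (intervalIntegral.continuousOn_primitive_interval' hg.intervalIntegrable hx)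
    (hf'.abs.continuousOn_mul (g := fun t => M * |t - x|) (by fun_prop))
    fun t ht => abs_integral_le_mul_abs_sub hM hx ht

theorem stmt_18 (f f' g : ℝ → ℝ) (a b : ℝ) (hab : a < b)
    (I : Set ℝ) (hI : IsOpen I) (hIab : Icc a b ⊆ I)
    (hf : ∀ t ∈ I, HasDerivAt f (f' t) t)
    (hf' : IntervalIntegrable f' volume a b)
    (hbdd : ∃ C, ∀ t ∈ Icc a b, |f' t| ≤ C)
    (hg : ContinuousOn g (Icc a b))
    (x : ℝ) (hx : x ∈ Icc a b) :
    |f a * (∫ s in a..x, g s) + f b * (∫ s in x..b, g s) - ∫ s in a..b, f s * g s|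
      ≤ sSup ((fun t => |g t|) '' Icc a b) * ∫ t in a..b, |t - x| * |f' t| :=
  stmt_18_general f f' g a b hab I hIab hf hf' hg x hx
end

section
/- Let f be differentiable on an open interval containing [a,b] with a < b, f' integrable on [a,b], g : [a,b] → ℝ continuous, and x ∈ [a,b]. Then |f(x)∫_a^b g − ∫_a^b fg| ≤ ‖g‖_∞ · [∫_a^x (t−a)|f'(t)| dt + ∫_x^b (b−t)|f'(t)| dt]. -/
open MeasureTheory Set intervalIntegral

/-!
Writing `f x * ∫ g - ∫ f g = ∫ (f x - f s) g s` and pulling out `sup |g|`, it remains to bound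
`∫_a^b |f x - f s| ds`. On `[a, x]` the fundamental theorem of calculus gives
`|f x - f s| ≤ ∫_s^x |f'|`, and exchanging the order of integration turns
`∫_a^x ∫_s^x |f'(t)| dt ds` into `∫_a^x (t - a) |f'(t)| dt`; symmetrically on `[x, b]`.
-/

section RepeatedIntegral

variable {h : ℝ → ℝ} {a b : ℝ}

theorem integral_integral_fixed_lower_eq (hab : a ≤ b) (hh : IntervalIntegrable h volume a b) :
    ∫ s in a..b, ∫ t in a..s, h t = ∫ t in a..b, (b - t) * h t := by
  have hF : IntegrableOn (fun p : ℝ × ℝ => (Iic p.1).indicator h p.2)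
      (uIoc a b ×ˢ uIoc a b) := by
    have : IsFiniteMeasure (volume.restrict (uIoc a b)) := by
      rw [uIoc_of_le hab]; infer_instance
    have hsnd : IntegrableOn (fun p : ℝ × ℝ => h p.2) (uIoc a b ×ˢ uIoc a b) := by
      rw [IntegrableOn, Measure.volume_eq_prod, ← Measure.prod_restrict]
      exact hh.def'.comp_snd _
    have hF_eq : (fun p : ℝ × ℝ => (Iic p.1).indicator h p.2)
        = {p : ℝ × ℝ | p.2 ≤ p.1}.indicator (fun p => h p.2) := by
      ext p; simp [indicator]
    rw [hF_eq]
    exact hsnd.indicator (measurableSet_le measurable_snd measurable_fst)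
  calc ∫ s in a..b, ∫ t in a..s, h t
      = ∫ s in a..b, ∫ t in a..b, (Iic s).indicator h t := by
        refine integral_congr fun s hs => ?_
        rw [uIcc_of_le hab] at hs
        exact (integral_indicator hs).symm
    _ = ∫ t in a..b, ∫ s in a..b, (Iic s).indicator h t :=
        intervalIntegral_intervalIntegral_swap hF
    _ = ∫ t in a..b, (b - t) * h t := by
        refine integral_congr_ae (Filter.Eventually.of_forall fun t ht => ?_)
        rw [uIoc_of_le hab] at ht
        have hind : (fun s => (Iic s).indicator h t) = (Ici t).indicator fun _ => h t := by
          ext s; simp [indicator]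
        have hIcc : Ioc a b ∩ Ici t = Icc t b := by
          ext s; simp only [mem_inter_iff, mem_Ioc, mem_Ici, mem_Icc]
          grind
        rw [hind, integral_of_le hab, setIntegral_indicator measurableSet_Ici, hIcc,
          setIntegral_const, Real.volume_real_Icc_of_le ht.2, smul_eq_mul]

theorem integral_integral_fixed_upper_eq (hab : a ≤ b) (hh : IntervalIntegrable h volume a b) :
    ∫ s in a..b, ∫ t in s..b, h t = ∫ t in a..b, (t - a) * h t := by
  have hprim : IntervalIntegrable (fun s => ∫ t in a..s, h t) volume a b :=
    (continuousOn_primitive_interval ((intervalIntegrable_iff').mp hh)).intervalIntegrable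
  calc ∫ s in a..b, ∫ t in s..b, h t
      = ∫ s in a..b, ((∫ t in a..b, h t) - ∫ t in a..s, h t) :=
        integral_congr fun s hs =>
          (integral_interval_sub_left hh (hh.mono_set (uIcc_subset_uIcc_left hs))).symm
    _ = ∫ t in a..b, ((b - a) * h t - (b - t) * h t) := by
        rw [integral_sub intervalIntegrable_const hprim, intervalIntegral.integral_const,
          smul_eq_mul, integral_integral_fixed_lower_eq hab hh, integral_sub (hh.const_mul _)
          (hh.continuousOn_mul (g := fun t => b - t) (by fun_prop)),
          intervalIntegral.integral_const_mul]
    _ = ∫ t in a..b, (t - a) * h t := by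
        congr 1; ext t; ring

end RepeatedIntegral

section FundamentalTheorem

variable {f f' : ℝ → ℝ} {a b x : ℝ}

theorem abs_sub_le_integral_abs_deriv (hab : a ≤ b) (hf : ∀ t ∈ Icc a b, HasDerivAt f (f' t) t)
    (hf' : IntervalIntegrable f' volume a b) :
    |f b - f a| ≤ ∫ t in a..b, |f' t| := by
  rw [← integral_eq_sub_of_hasDerivAt (by rwa [uIcc_of_le hab]) hf']
  exact abs_integral_le_integral_abs hab

theorem integral_abs_sub_left_le (hax : a ≤ x) (hf : ∀ t ∈ Icc a x, HasDerivAt f (f' t) t)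
    (hf' : IntervalIntegrable f' volume a x) :
    ∫ s in a..x, |f x - f s| ≤ ∫ t in a..x, (t - a) * |f' t| := by
  have hfc : ContinuousOn f (Icc a x) := fun t ht => (hf t ht).continuousAt.continuousWithinAt
  have hprim : IntervalIntegrable (fun s => ∫ t in s..x, |f' t|) volume a x :=
    (continuousOn_primitive_interval_left ((intervalIntegrable_iff').mp hf'.abs)).intervalIntegrable
  calc ∫ s in a..x, |f x - f s|
      ≤ ∫ s in a..x, ∫ t in s..x, |f' t| :=
        integral_mono_on hax ((continuousOn_const.sub hfc).abs.intervalIntegrable_of_Icc hax)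
          hprim fun s hs => abs_sub_le_integral_abs_deriv hs.2
            (fun t ht => hf t ⟨hs.1.trans ht.1, ht.2⟩)
            (hf'.mono_set (uIcc_subset_uIcc_right (by rwa [uIcc_of_le hax])))
    _ = ∫ t in a..x, (t - a) * |f' t| := integral_integral_fixed_upper_eq hax hf'.abs

theorem integral_abs_sub_right_le (hxb : x ≤ b) (hf : ∀ t ∈ Icc x b, HasDerivAt f (f' t) t)
    (hf' : IntervalIntegrable f' volume x b) :
    ∫ s in x..b, |f x - f s| ≤ ∫ t in x..b, (b - t) * |f' t| := by
  have hfc : ContinuousOn f (Icc x b) := fun t ht => (hf t ht).continuousAt.continuousWithinAt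
  have hprim : IntervalIntegrable (fun s => ∫ t in x..s, |f' t|) volume x b :=
    (continuousOn_primitive_interval ((intervalIntegrable_iff').mp hf'.abs)).intervalIntegrable
  calc ∫ s in x..b, |f x - f s|
      ≤ ∫ s in x..b, ∫ t in x..s, |f' t| :=
        integral_mono_on hxb ((continuousOn_const.sub hfc).abs.intervalIntegrable_of_Icc hxb)
          hprim fun s hs => abs_sub_comm (f x) (f s) ▸ abs_sub_le_integral_abs_deriv hs.1
            (fun t ht => hf t ⟨ht.1, ht.2.trans hs.2⟩)
            (hf'.mono_set (uIcc_subset_uIcc_left (by rwa [uIcc_of_le hxb])))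
    _ = ∫ t in x..b, (b - t) * |f' t| := integral_integral_fixed_lower_eq hxb hf'.abs

theorem integral_abs_sub_le (hx : x ∈ Icc a b) (hf : ∀ t ∈ Icc a b, HasDerivAt f (f' t) t)
    (hf' : IntervalIntegrable f' volume a b) :
    ∫ s in a..b, |f x - f s|
      ≤ (∫ t in a..x, (t - a) * |f' t|) + ∫ t in x..b, (b - t) * |f' t| := by
  obtain ⟨hax, hxb⟩ := hx
  have hab : a ≤ b := hax.trans hxb
  have hx : x ∈ uIcc a b := by rw [uIcc_of_le hab]; exact ⟨hax, hxb⟩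
  have hfc : ContinuousOn f (Icc a b) := fun t ht => (hf t ht).continuousAt.continuousWithinAt
  have hdiff : IntervalIntegrable (fun s => |f x - f s|) volume a b :=
    (continuousOn_const.sub hfc).abs.intervalIntegrable_of_Icc hab
  rw [← integral_add_adjacent_intervals (hdiff.mono_set (uIcc_subset_uIcc_left hx))
    (hdiff.mono_set (uIcc_subset_uIcc_right hx))]
  exact add_le_add
    (integral_abs_sub_left_le hax (fun t ht => hf t ⟨ht.1, ht.2.trans hxb⟩)
      (hf'.mono_set (uIcc_subset_uIcc_left hx)))
    (integral_abs_sub_right_le hxb (fun t ht => hf t ⟨hax.trans ht.1, ht.2⟩)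
      (hf'.mono_set (uIcc_subset_uIcc_right hx)))

end FundamentalTheorem

theorem const_mul_integral_sub_integral_mul {u g : ℝ → ℝ} {a b : ℝ} (c : ℝ)
    (hg : IntervalIntegrable g volume a b)
    (hug : IntervalIntegrable (fun s => u s * g s) volume a b) :
    c * (∫ s in a..b, g s) - ∫ s in a..b, u s * g s = ∫ s in a..b, (c - u s) * g s := by
  simp only [sub_mul]
  rw [integral_sub (hg.const_mul c) hug, intervalIntegral.integral_const_mul]

theorem abs_integral_mul_le_sSup_mul {u g : ℝ → ℝ} {a b : ℝ} (hab : a ≤ b)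
    (hu : IntervalIntegrable u volume a b) (hg : ContinuousOn g (Icc a b)) :
    |∫ s in a..b, u s * g s| ≤ sSup ((fun t => |g t|) '' Icc a b) * ∫ s in a..b, |u s| := by
  set M := sSup ((fun t => |g t|) '' Icc a b)
  have hM : ∀ t ∈ Icc a b, |g t| ≤ M := fun t ht =>
    le_csSup (isCompact_Icc.image_of_continuousOn hg.abs).bddAbove ⟨t, ht, rfl⟩
  rw [← intervalIntegral.integral_const_mul, ← Real.norm_eq_abs]
  refine norm_integral_le_of_norm_le hab (Filter.Eventually.of_forall fun s hs => ?_)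
    (hu.abs.const_mul M)
  rw [norm_mul, Real.norm_eq_abs, Real.norm_eq_abs, mul_comm]
  exact mul_le_mul_of_nonneg_right (hM s (Ioc_subset_Icc_self hs)) (abs_nonneg _)

theorem stmt_19_general (f f' g : ℝ → ℝ) (a b : ℝ)
    (I : Set ℝ) (hIab : Icc a b ⊆ I)
    (hf : ∀ t ∈ I, HasDerivAt f (f' t) t)
    (hf' : IntervalIntegrable f' volume a b)
    (hg : ContinuousOn g (Icc a b))
    (x : ℝ) (hx : x ∈ Icc a b) :
    |f x * (∫ s in a..b, g s) - ∫ s in a..b, f s * g s|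
      ≤ sSup ((fun t => |g t|) '' Icc a b) *
        ((∫ t in a..x, (t - a) * |f' t|) + ∫ t in x..b, (b - t) * |f' t|) := by
  have hab : a ≤ b := hx.1.trans hx.2
  have hfab : ∀ t ∈ Icc a b, HasDerivAt f (f' t) t := fun t ht => hf t (hIab ht)
  have hfc : ContinuousOn f (Icc a b) := fun t ht => (hfab t ht).continuousAt.continuousWithinAt
  have hM : 0 ≤ sSup ((fun t => |g t|) '' Icc a b) :=
    Real.sSup_nonneg fun _ ⟨t, _, ht⟩ => ht ▸ abs_nonneg (g t)
  rw [const_mul_integral_sub_integral_mul _ (hg.intervalIntegrable_of_Icc hab)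
    ((hfc.mul hg).intervalIntegrable_of_Icc hab)]
  calc |∫ s in a..b, (f x - f s) * g s|
      ≤ sSup ((fun t => |g t|) '' Icc a b) * ∫ s in a..b, |f x - f s| :=
        abs_integral_mul_le_sSup_mul hab
          ((continuousOn_const.sub hfc).intervalIntegrable_of_Icc hab) hg
    _ ≤ _ := mul_le_mul_of_nonneg_left (integral_abs_sub_le hx hfab hf') hM

theorem stmt_19 (f f' g : ℝ → ℝ) (a b : ℝ) (hab : a < b)
    (I : Set ℝ) (hI : IsOpen I) (hIab : Icc a b ⊆ I)
    (hf : ∀ t ∈ I, HasDerivAt f (f' t) t)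
    (hf' : IntervalIntegrable f' volume a b)
    (hg : ContinuousOn g (Icc a b))
    (x : ℝ) (hx : x ∈ Icc a b) :
    |f x * (∫ s in a..b, g s) - ∫ s in a..b, f s * g s|
      ≤ sSup ((fun t => |g t|) '' Icc a b) *
        ((∫ t in a..x, (t - a) * |f' t|) + ∫ t in x..b, (b - t) * |f' t|) :=
  stmt_19_general f f' g a b I hIab hf hf' hg x hx
end
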